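/- arXiv:1903.11670 — 2 statements merged into one kernel-verified Lean document; each statement's English description precedes it below -/
import Mathlib

section
/- For every pair of natural numbers n ≥ 1 and s ≥ 0, c(n + s) + c(n) + s ≥ c(2n + s). -/
/-- The Colless index of the maximally balanced bifurcating tree with `n` leaves:
`c 1 = 0` and `c n = c ⌈n/2⌉ + c ⌊n/2⌋ + (⌈n/2⌉ - ⌊n/2⌋)` for `n ≥ 2`. -/
def c : ℕ → ℕ
  | 0 => 0
  | 1 => 0
  | n + 2 => c ((n + 3) / 2) + c ((n + 2) / 2) + ((n + 3) / 2 - (n + 2) / 2)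
decreasing_by all_goals omega

lemma c_one : c 1 = 0 := by simp [c]

lemma c_even (m : ℕ) (hm : 1 ≤ m) : c (2 * m) = 2 * c m := by
  rw [show 2 * m = (2 * m - 2) + 2 by omega, c]
  have h1 : (2 * m - 2 + 3) / 2 = m := by omega
  have h2 : (2 * m - 2 + 2) / 2 = m := by omega
  rw [h1, h2]; omega

lemma c_odd (m : ℕ) (hm : 1 ≤ m) : c (2 * m + 1) = c (m + 1) + c m + 1 := by
  rw [show 2 * m + 1 = (2 * m - 1) + 2 by omega, c]
  have h1 : (2 * m - 1 + 3) / 2 = m + 1 := by omega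
  have h2 : (2 * m - 1 + 2) / 2 = m := by omega
  rw [h1, h2]; omega

lemma c_two : c 2 = 0 := by
  rw [show (2:ℕ) = 2 * 1 by norm_num, c_even 1 le_rfl, c_one]

lemma c_succ_le : ∀ N a : ℕ, a ≤ N → 1 ≤ a → c (a + 1) ≤ c a + (a - 1) := by
  intro N
  induction N with
  | zero => intro a h h1; omega
  | succ N ih =>
    intro a haN ha
    rcases Nat.lt_or_ge a 2 with h2 | h2
    · have : a = 1 := by omega
      subst this
      rw [show (1:ℕ) + 1 = 2 from rfl, c_two, c_one]
    · rcases Nat.even_or_odd a with ⟨m, hm⟩ | ⟨m, hm⟩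
      · have hm1 : 1 ≤ m := by omega
        have e1 : c (2 * m) = 2 * c m := c_even m hm1
        have e2 : c (2 * m + 1) = c (m + 1) + c m + 1 := c_odd m hm1
        have h3 := ih m (by omega) hm1
        subst hm
        rw [show m + m = 2 * m by ring]
        omega
      · have hm1 : 1 ≤ m := by omega
        have e1 : c (2 * (m + 1)) = 2 * c (m + 1) := c_even (m + 1) (by omega)
        have e2 : c (2 * m + 1) = c (m + 1) + c m + 1 := c_odd m hm1
        have h3 := ih m (by omega) hm1
        subst hm
        rw [show 2 * m + 1 + 1 = 2 * (m + 1) by ring]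
        omega

lemma c_key : ∀ N a b : ℕ, a + b ≤ N → 1 ≤ b → b ≤ a → c (a + b) ≤ c a + c b + (a - b) := by
  intro N
  induction N with
  | zero => intro a b h hb hba; omega
  | succ N ih =>
    intro a b hN hb hba
    rcases eq_or_lt_of_le hb with hb1 | hb2
    · have h1 := c_succ_le a a le_rfl (by omega)
      rw [← hb1, c_one]
      omega
    rcases eq_or_lt_of_le hba with rfl | hab
    · rw [show b + b = 2 * b by ring, c_even b (by omega)]
      omega
    rcases Nat.even_or_odd a with ⟨a', ha⟩ | ⟨a', ha⟩ <;>
      rcases Nat.even_or_odd b with ⟨b', hbp⟩ | ⟨b', hbp⟩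
    · -- a = 2a', b = 2b'
      subst ha hbp
      have h1 := ih a' b' (by omega) (by omega) (by omega)
      have e1 : c (2 * (a' + b')) = 2 * c (a' + b') := c_even _ (by omega)
      have e2 : c (2 * a') = 2 * c a' := c_even _ (by omega)
      have e3 : c (2 * b') = 2 * c b' := c_even _ (by omega)
      rw [show a' + a' + (b' + b') = 2 * (a' + b') by ring,
        show a' + a' = 2 * a' by ring, show b' + b' = 2 * b' by ring]
      omega
    · -- a = 2a', b = 2b'+1
      subst ha hbp
      have h1 := ih a' b' (by omega) (by omega) (by omega)
      have h2 := ih a' (b' + 1) (by omega) (by omega) (by omega)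
      rw [show a' + (b' + 1) = a' + b' + 1 by ring] at h2
      have e1 : c (2 * (a' + b') + 1) = c (a' + b' + 1) + c (a' + b') + 1 :=
        c_odd _ (by omega)
      have e2 : c (2 * a') = 2 * c a' := c_even _ (by omega)
      have e3 : c (2 * b' + 1) = c (b' + 1) + c b' + 1 := c_odd _ (by omega)
      rw [show a' + a' + (2 * b' + 1) = 2 * (a' + b') + 1 by ring,
        show a' + a' = 2 * a' by ring]
      omega
    · -- a = 2a'+1, b = 2b'
      subst ha hbp
      have h1 := ih a' b' (by omega) (by omega) (by omega)
      have h2 := ih (a' + 1) b' (by omega) (by omega) (by omega)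
      rw [show a' + 1 + b' = a' + b' + 1 by ring] at h2
      have e1 : c (2 * (a' + b') + 1) = c (a' + b' + 1) + c (a' + b') + 1 :=
        c_odd _ (by omega)
      have e2 : c (2 * a' + 1) = c (a' + 1) + c a' + 1 := c_odd _ (by omega)
      have e3 : c (2 * b') = 2 * c b' := c_even _ (by omega)
      rw [show 2 * a' + 1 + (b' + b') = 2 * (a' + b') + 1 by ring,
        show b' + b' = 2 * b' by ring]
      omega
    · -- a = 2a'+1, b = 2b'+1
      subst ha hbp
      have h1 := ih (a' + 1) b' (by omega) (by omega) (by omega)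
      have h2 := ih a' (b' + 1) (by omega) (by omega) (by omega)
      rw [show a' + 1 + b' = a' + b' + 1 by ring] at h1
      rw [show a' + (b' + 1) = a' + b' + 1 by ring] at h2
      have e1 : c (2 * (a' + b' + 1)) = 2 * c (a' + b' + 1) := c_even _ (by omega)
      have e2 : c (2 * a' + 1) = c (a' + 1) + c a' + 1 := c_odd _ (by omega)
      have e3 : c (2 * b' + 1) = c (b' + 1) + c b' + 1 := c_odd _ (by omega)
      rw [show 2 * a' + 1 + (2 * b' + 1) = 2 * (a' + b' + 1) by ring]
      omega

/-- For every `n ≥ 1` and `s ≥ 0`, `c (n + s) + c n + s ≥ c (2n + s)`. -/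
theorem c_superadditive (n s : ℕ) (hn : 1 ≤ n) :
    c (n + s) + c n + s ≥ c (2 * n + s) := by
  have h := c_key (2 * n + s) (n + s) n (by omega) hn (by omega)
  rw [show n + s + n = 2 * n + s by ring] at h
  omega
end

section
/- If n = 2^k for some k ≥ 1, then QB(n) = {(n/2, n/2)}. -/
/-- \`QB n\` is the set of pairs \`(n₁, n₂)\` with \`1 ≤ n₂ ≤ n₁\`, \`n₁ + n₂ = n\` and
\`c n₁ + c n₂ + (n₁ - n₂) = c n\`. -/
def QB (n : ℕ) : Set (ℕ × ℕ) :=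
  {p : ℕ × ℕ | 1 ≤ p.2 ∧ p.2 ≤ p.1 ∧ p.1 + p.2 = n ∧ c p.1 + c p.2 + (p.1 - p.2) = c n}

lemma c_pow (k : ℕ) : c (2 ^ k) = 0 := by
  induction k with
  | zero => norm_num [c]
  | succ k ih =>
    have h2 : 2 ^ (k + 1) = (2 ^ (k + 1) - 2) + 2 := by
      have : 2 ≤ 2 ^ (k + 1) := by
        calc 2 = 2 ^ 1 := rfl
        _ ≤ 2 ^ (k + 1) := Nat.pow_le_pow_right (by norm_num) (by omega)
      omega
    rw [h2, c]
    have h3 : (2 ^ (k + 1) - 2 + 3) / 2 = 2 ^ k := by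
      have : 2 ^ (k + 1) = 2 * 2 ^ k := by ring
      omega
    have h4 : (2 ^ (k + 1) - 2 + 2) / 2 = 2 ^ k := by
      have : 2 ^ (k + 1) = 2 * 2 ^ k := by ring
      omega
    rw [h3, h4, ih]; omega

/-- If `n = 2^k` with `k ≥ 1`, then `QB n = {(n/2, n/2)}`. -/
theorem QB_of_pow_two (n k : ℕ) (hk : 1 ≤ k) (hn : n = 2 ^ k) :
    QB n = {(n / 2, n / 2)} := by
  obtain ⟨j, rfl⟩ : ∃ j, k = j + 1 := ⟨k - 1, by omega⟩
  have hhalf : n / 2 = 2 ^ j := by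
    subst hn; rw [pow_succ, Nat.mul_div_cancel _ (by norm_num)]
  have hcn : c n = 0 := hn ▸ c_pow _
  have hsum : n = 2 ^ j + 2 ^ j := by subst hn; ring
  ext ⟨a, b⟩
  simp only [QB, Set.mem_setOf_eq, Set.mem_singleton_iff, Prod.mk.injEq]
  constructor
  · rintro ⟨h1, h2, h3, h4⟩
    rw [hcn] at h4
    have hab : a = b := by omega
    constructor <;> omega
  · rintro ⟨rfl, rfl⟩
    rw [hhalf, hcn, c_pow]
    refine ⟨Nat.one_le_two_pow, le_refl _, by omega, by omega⟩
end
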